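/- In a group with elements x₂, x₅, x_{n+5} satisfying [x₂, x_{n+5}] = e and (x₅ x_{n+5})² = (x_{n+5} x₅)², the relation (x₂·(x₂x_{n+5}x₅x_{n+5}⁻¹x₂⁻¹))² = ((x₂x_{n+5}x₅x_{n+5}⁻¹x₂⁻¹)·x₂)² implies (x₂x₅)² = (x₅x₂)². -/
import Mathlib


/-- Let `x₂, x₅, c` (with `c = x_{n+5}`) satisfy `[x₂, c] = e` and `(x₅c)² = (cx₅)²`.
If `(x₂ · (x₂cx₅c⁻¹x₂⁻¹))² = ((x₂cx₅c⁻¹x₂⁻¹) · x₂)²`, then `(x₂x₅)² = (x₅x₂)²`. -/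
theorem stmt_14 {G : Type*} [Group G] (x₂ x₅ c : G)
    (hcom : x₂ * c = c * x₂)
    (h5c : (x₅ * c) ^ 2 = (c * x₅) ^ 2)
    (h4 : (x₂ * (x₂ * c * x₅ * c⁻¹ * x₂⁻¹)) ^ 2 =
      ((x₂ * c * x₅ * c⁻¹ * x₂⁻¹) * x₂) ^ 2) :
    (x₂ * x₅) ^ 2 = (x₅ * x₂) ^ 2 := by
  have hC : Commute x₂ c := hcom
  have hc1 : ∀ t : G, x₂ * (c * t) = c * (x₂ * t) := fun t => by
    rw [← mul_assoc, hcom, mul_assoc]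
  have hc2 : ∀ t : G, x₂ * (c⁻¹ * t) = c⁻¹ * (x₂ * t) := fun t => by
    rw [← mul_assoc, hC.inv_right.eq, mul_assoc]
  have hc3 : ∀ t : G, x₂⁻¹ * (c * t) = c * (x₂⁻¹ * t) := fun t => by
    rw [← mul_assoc, hC.inv_left.eq, mul_assoc]
  have hc4 : ∀ t : G, x₂⁻¹ * (c⁻¹ * t) = c⁻¹ * (x₂⁻¹ * t) := fun t => by
    rw [← mul_assoc, hC.inv_inv.eq, mul_assoc]
  simp only [pow_two, mul_assoc] at h4 ⊢
  simp only [hc1, hc2, hc3, hc4, inv_mul_cancel_left, mul_inv_cancel_left, inv_mul_cancel,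
    mul_inv_cancel, mul_one] at h4
  have h5 := congrArg (fun g => g * (x₂ * c)) h4
  simp only [mul_assoc, hcom, hc3, hc4, inv_mul_cancel_left, mul_inv_cancel_left, inv_mul_cancel,
    mul_one] at h5
  exact mul_left_cancel (mul_left_cancel h5)
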